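/- arXiv:math/9911178 — 4 statements merged into one kernel-verified Lean document; each statement's English description precedes it below -/
import Mathlib

section
/- With A and D as above, if u ∈ A satisfies δ_j(u) = 0 for all j ∈ J, then u = D(v) + λ for some v ∈ A and λ ∈ ℂ. In other words, the kernel of the variational derivative equals D(A) ⊕ ℂ·1. -/
/-!
Grade `A` by total degree. `D` preserves degrees and `∂/∂ψ_j^{(n)}` lowers them by one, so
`δ_j` maps the component of degree `d + 1` of `u` to the component of degree `d` of `δ_j u`;
hence every homogeneous component of `u` lies in the kernel. For such a component `q` of degree
`d + 1`, Euler's identity gives `(d + 1) q = Σ ψ_j^{(n)} ∂q/∂ψ_j^{(n)}`, and integrating by parts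
`n` times, `ψ_j^{(n)} g ≡ ψ_j^{(0)} (-D)^n g` modulo `D(A)`. Thus
`(d + 1) q ≡ Σ_j ψ_j^{(0)} δ_j q = 0`, and only the constant term of `u` escapes `D(A)`.
-/

open MvPolynomial

/-- The polynomial algebra `A = ℂ[ψ_j^{(n)}]` in commuting formal variables. -/
abbrev FormalAlg (J : Type) := MvPolynomial (J × ℕ) ℂ

/-- The derivation `D` with `D(ψ_j^{(n)}) = ψ_j^{(n+1)}`. -/
noncomputable def Dop (J : Type) : Derivation ℂ (FormalAlg J) (FormalAlg J) :=
  mkDerivation ℂ (fun p => X (p.1, p.2 + 1))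

/-- The variational operator `δ_j = Σ_{n≥0} (-D)^n ∘ ∂/∂ψ_j^{(n)}`. -/
noncomputable def varOp (J : Type) (j : J) (u : FormalAlg J) : FormalAlg J :=
  ∑ᶠ n : ℕ, ((-1 : ℂ) ^ n) • (⇑(Dop J))^[n] (pderiv (j, n) u)

namespace MvPolynomial

variable {σ τ R : Type*} [CommSemiring R]

theorem IsHomogeneous.mkDerivation {f : σ → MvPolynomial σ R}
    (hf : ∀ i, (f i).IsHomogeneous 1) {φ : MvPolynomial σ R} {n : ℕ} (h : φ.IsHomogeneous n) :
    (mkDerivation R f φ).IsHomogeneous n := by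
  rw [← mem_homogeneousSubmodule, homogeneousSubmodule_eq_finsupp_supported,
    AddMonoidAlgebra.supported_eq_span_single] at h
  refine Submodule.span_induction ?_ ?_ (fun p q _ _ hp hq ↦ ?_) (fun r p _ hp ↦ ?_) h
  · rintro _ ⟨m, hm, rfl⟩
    dsimp only
    rw [single_eq_monomial, mkDerivation_monomial, ← mem_homogeneousSubmodule]
    refine Submodule.smul_mem _ _ (Submodule.sum_mem _ fun i hi ↦ ?_)
    have hmi : m i ≠ 0 := Finsupp.mem_support_iff.mp hi
    simp only [mem_homogeneousSubmodule, smul_eq_mul]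
    convert (isHomogeneous_monomial _ rfl).mul (hf i)
    rw [← hm, Finsupp.degree_eq_weight_one, ← Finsupp.weight_sub_single_add hmi]
  · rw [map_zero]; exact isHomogeneous_zero _ _ _
  · rw [map_add]; exact hp.add hq
  · rw [Derivation.map_smul, ← mem_homogeneousSubmodule]; exact Submodule.smul_mem _ _ hp

theorem homogeneousComponent_map_of_isHomogeneous
    (f : MvPolynomial σ R →ₗ[R] MvPolynomial τ R) {m : ℕ}
    (hf : ∀ k φ, φ.IsHomogeneous (k + m) → (f φ).IsHomogeneous k)
    (hf₀ : ∀ k < m, ∀ φ, φ.IsHomogeneous k → f φ = 0) (k : ℕ) (φ : MvPolynomial σ R) :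
    homogeneousComponent k (f φ) = f (homogeneousComponent (k + m) φ) := by
  induction φ using MvPolynomial.induction_on' with
  | add p q hp hq => simp only [map_add, hp, hq]
  | monomial s a =>
    have hs : (monomial s a).IsHomogeneous s.degree := isHomogeneous_monomial a rfl
    rw [homogeneousComponent_of_mem hs]
    by_cases hlt : s.degree < m
    · rw [hf₀ _ hlt _ hs, if_neg (by omega), map_zero, map_zero]
    · obtain ⟨l, hl⟩ := Nat.exists_eq_add_of_le' (not_lt.mp hlt)
      rw [hl] at hs ⊢
      rw [homogeneousComponent_of_mem (hf l _ hs)]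
      by_cases hkl : k = l <;> simp [hkl]

theorem IsHomogeneous.sum_X_mul_pderiv_of_vars_subset {φ : MvPolynomial σ R} {n : ℕ}
    (h : φ.IsHomogeneous n) {S : Finset σ} (hS : φ.vars ⊆ S) :
    ∑ i ∈ S, X i * pderiv i φ = n • φ := by
  conv_lhs => rw [φ.as_sum]
  conv_rhs => rw [φ.as_sum, Finset.smul_sum]
  simp_rw [map_sum, Finset.mul_sum]
  rw [Finset.sum_comm]
  refine Finset.sum_congr rfl fun m hm ↦ ?_
  simp_rw [X_mul_pderiv_monomial, ← Finset.sum_smul]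
  congr 1
  have hmS : m.support ⊆ S := fun i hi ↦ hS ((mem_vars_iff_mem_support i).mpr ⟨m, hm, hi⟩)
  have hm_deg : m.degree = n := by
    rw [Finsupp.degree_eq_weight_one]; exact h (mem_support_iff.mp hm)
  rw [← hm_deg, Finsupp.degree_apply,
    Finset.sum_subset hmS fun i _ hi ↦ Finsupp.notMem_support_iff.mp hi]

theorem homogeneousComponent_pderiv (i : σ) (k : ℕ) (φ : MvPolynomial σ R) :
    homogeneousComponent k (pderiv i φ) = pderiv i (homogeneousComponent (k + 1) φ) := by
  refine homogeneousComponent_map_of_isHomogeneous (pderiv i).toLinearMap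
    (fun k φ h ↦ h.pderiv) (fun k hk φ h ↦ ?_) k φ
  obtain rfl : k = 0 := Nat.lt_one_iff.mp hk
  rw [← totalDegree_zero_iff_isHomogeneous, totalDegree_eq_zero_iff_eq_C] at h
  rw [Derivation.coeFn_coe, h, pderiv_C]

end MvPolynomial

theorem Derivation.mul_sub_mul_iterate_mem_range {R A : Type*} [CommRing R] [CommRing A]
    [Algebra R A] (D : Derivation R A A) (x : ℕ → A) (hx : ∀ n, D (x n) = x (n + 1))
    (n : ℕ) (g : A) :
    x n * g - x 0 * ((-1 : R) ^ n • (⇑D)^[n] g) ∈ LinearMap.range (D : A →ₗ[R] A) := by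
  induction n generalizing g with
  | zero => simp
  | succ n ih =>
    have hparts : x (n + 1) * g - x 0 * ((-1 : R) ^ (n + 1) • (⇑D)^[n + 1] g) =
        D (x n * g) - (x n * D g - x 0 * ((-1 : R) ^ n • (⇑D)^[n] (D g))) := by
      rw [Derivation.leibniz, hx, Function.iterate_succ_apply, pow_succ, mul_neg_one, neg_smul,
        smul_eq_mul, smul_eq_mul]
      ring
    rw [hparts]
    exact sub_mem (LinearMap.mem_range_self _ _) (ih (D g))

variable {J : Type}

theorem Dop_X (p : J × ℕ) : Dop J (X p) = X (p.1, p.2 + 1) :=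
  mkDerivation_X ℂ _ p

theorem homogeneousComponent_Dop_iterate (d n : ℕ) (φ : FormalAlg J) :
    homogeneousComponent d ((⇑(Dop J))^[n] φ) = (⇑(Dop J))^[n] (homogeneousComponent d φ) := by
  have hcomm : Function.Commute (homogeneousComponent d) (Dop J) := fun φ ↦
    homogeneousComponent_map_of_isHomogeneous (m := 0) (Dop J).toLinearMap
      (fun _ _ h ↦ h.mkDerivation fun p ↦ isHomogeneous_X ℂ _) (by simp) d φ
  exact hcomm.iterate_right n φ

theorem support_varOp_term_subset (j : J) (u : FormalAlg J) :
    (Function.support fun n : ℕ ↦ ((-1 : ℂ) ^ n) • (⇑(Dop J))^[n] (pderiv (j, n) u)) ⊆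
      {n | (j, n) ∈ u.vars} := by
  intro n hn
  by_contra hvars
  exact hn (by simp only [pderiv_eq_zero_of_notMem_vars hvars, iterate_map_zero, smul_zero])

theorem varOp_eq_sum (j : J) (u : FormalAlg J) {N : Finset ℕ}
    (hN : ∀ n, (j, n) ∈ u.vars → n ∈ N) :
    varOp J j u = ∑ n ∈ N, ((-1 : ℂ) ^ n) • (⇑(Dop J))^[n] (pderiv (j, n) u) :=
  finsum_eq_sum_of_support_subset _ ((support_varOp_term_subset j u).trans hN)

theorem varOp_homogeneousComponent (j : J) (d : ℕ) (u : FormalAlg J) :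
    varOp J j (homogeneousComponent (d + 1) u) = homogeneousComponent d (varOp J j u) := by
  have hfin := (u.vars.finite_toSet.preimage (Prod.mk_right_injective j).injOn).subset
    (support_varOp_term_subset j u)
  rw [varOp, varOp, map_finsum _ hfin]
  simp_rw [map_smul, homogeneousComponent_Dop_iterate, homogeneousComponent_pderiv]

theorem mem_range_Dop_of_isHomogeneous_of_varOp_eq_zero {d : ℕ} {q : FormalAlg J}
    (hq : q.IsHomogeneous (d + 1)) (hv : ∀ j, varOp J j q = 0) :
    q ∈ LinearMap.range (Dop J : FormalAlg J →ₗ[ℂ] FormalAlg J) := by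
  classical
  set N := q.vars.image Prod.snd
  have hN : ∀ j n, (j, n) ∈ q.vars → n ∈ N := fun j n h ↦ Finset.mem_image_of_mem _ h
  have hinner : ∀ j, ∑ n ∈ N, X (j, n) * pderiv (j, n) q ∈
      LinearMap.range (Dop J : FormalAlg J →ₗ[ℂ] FormalAlg J) := by
    intro j
    have hδ : X (j, 0) * ∑ n ∈ N, ((-1 : ℂ) ^ n) • (⇑(Dop J))^[n] (pderiv (j, n) q) = 0 := by
      rw [← varOp_eq_sum j q (hN j), hv j, mul_zero]
    rw [← sub_zero (∑ n ∈ N, _), ← hδ, Finset.mul_sum, ← Finset.sum_sub_distrib]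
    exact Submodule.sum_mem _ fun n _ ↦ (Dop J).mul_sub_mul_iterate_mem_range
      (fun n ↦ X (j, n)) (fun n ↦ Dop_X (j, n)) n _
  have hvars : q.vars ⊆ q.vars.image Prod.fst ×ˢ N := fun p hp ↦
    Finset.mem_product.mpr ⟨Finset.mem_image_of_mem _ hp, Finset.mem_image_of_mem _ hp⟩
  have hEuler := hq.sum_X_mul_pderiv_of_vars_subset hvars
  rw [Finset.sum_product, ← Nat.cast_smul_eq_nsmul ℂ] at hEuler
  have hd : ((d + 1 : ℕ) : ℂ) ≠ 0 := Nat.cast_ne_zero.mpr d.succ_ne_zero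
  rw [← Submodule.smul_mem_iff _ hd, ← hEuler]
  exact Submodule.sum_mem _ fun j _ ↦ hinner j

/-- If `δ_j(u) = 0` for all `j`, then `u = D(v) + λ` for some `v ∈ A`, `λ ∈ ℂ`:
the kernel of the variational derivative equals `D(A) ⊕ ℂ·1`. -/
theorem varOp_kernel (J : Type) (u : FormalAlg J)
    (h : ∀ j : J, varOp J j u = 0) :
    ∃ (v : FormalAlg J) (l : ℂ), u = Dop J v + C l := by
  have hcomponents : ∀ i, homogeneousComponent (i + 1) u ∈
      LinearMap.range (Dop J : FormalAlg J →ₗ[ℂ] FormalAlg J) := fun i ↦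
    mem_range_Dop_of_isHomogeneous_of_varOp_eq_zero (homogeneousComponent_isHomogeneous _ _)
      fun j ↦ by rw [varOp_homogeneousComponent, h j, map_zero]
  have hsum : u - C (coeff 0 u) =
      ∑ i ∈ Finset.range u.totalDegree, homogeneousComponent (i + 1) u := by
    rw [sub_eq_iff_eq_add]
    conv_lhs => rw [← sum_homogeneousComponent u]
    rw [Finset.sum_range_succ', homogeneousComponent_zero]
  obtain ⟨v, hv⟩ := hsum ▸ Submodule.sum_mem _ fun i _ ↦ hcomponents i
  exact ⟨v, coeff 0 u, by rw [Derivation.coeFn_coe] at hv; rw [hv, sub_add_cancel]⟩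
end

section
/- Let (R, ∂, Y⁺) satisfy: R is a ℂ[∂]-module, Y⁺(u,z)v ∈ R[z⁻¹]z⁻¹, Y⁺(∂u, z) = dY⁺(u,z)/dz, and the skew-symmetry Y⁺(u,z)v = Res_x e^{x∂} Y⁺(v,−x)u / (z−x) (with (z−x)⁻¹ expanded in nonnegative powers of x). Then ∂ acts as a derivation-type operator: ∂ Y⁺(u,z)v − Y⁺(u,z)(∂v) = Y⁺(∂u, z)v for all u, v ∈ R. -/
private lemma iterate_smul' {R : Type} [AddCommGroup R] [Module ℂ R] (D : R →ₗ[ℂ] R)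
    (p : ℕ) (a : ℂ) (x : R) : (⇑D)^[p] (a • x) = a • (⇑D)^[p] x := by
  induction p generalizing x with
  | zero => rfl
  | succ p ih => rw [Function.iterate_succ_apply, map_smul, ih, ← Function.iterate_succ_apply]

private lemma sum_shift_eq {M : Type*} [AddCommMonoid M] (K : ℕ) (f g : ℕ → M)
    (h0 : g 0 = 0) (hstep : ∀ q, q < K + 1 → f q = g (q + 1)) (htop : f (K + 1) = 0) :
    ∑ p ∈ Finset.range (K + 2), f p = ∑ p ∈ Finset.range (K + 2), g p := by
  rw [Finset.sum_range_succ f, htop, add_zero, Finset.sum_range_succ' g, h0, add_zero]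
  exact Finset.sum_congr rfl fun q hq => hstep q (Finset.mem_range.mp hq)

/-- Proposition 3.3: if `Y⁺` (given in components by `Y u n v = u₍ₙ₎v`, with
`Y⁺(u,z)v = Σₙ (u₍ₙ₎v) z^{-n-1} ∈ R[z⁻¹]z⁻¹`) satisfies the translation axiom
`Y⁺(∂u,z) = dY⁺(u,z)/dz`, i.e. `(∂u)₍₀₎v = 0` and `(∂u)₍ₙ₊₁₎v = -(n+1)·u₍ₙ₎v`,
and the skew-symmetry axiom
`u₍ₘ₎v = (-1)^{ij+1} Σ_p ((-1)^{m+p}/p!) ∂^p (v₍ₘ₊ₚ₎u)` for homogeneous `u,v`,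
then `∂` acts as a derivation-type operator:
`∂(u₍ₙ₎v) − u₍ₙ₎(∂v) = (∂u)₍ₙ₎v`. -/
theorem derivation_property_of_translation_and_skew
    (R : Type) [AddCommGroup R] [Module ℂ R]
    (Rg : ZMod 2 → Submodule ℂ R)
    (D : R →ₗ[ℂ] R) (Y : R → ℕ → R → R)
    (hDg : ∀ (i : ZMod 2) (u : R), u ∈ Rg i → D u ∈ Rg i)
    (hfin : ∀ u v : R, ∃ N : ℕ, ∀ n ≥ N, Y u n v = 0)
    (htrans0 : ∀ u v : R, Y (D u) 0 v = 0)
    (htrans : ∀ (u v : R) (n : ℕ), Y (D u) (n + 1) v = (-(n + 1 : ℂ)) • Y u n v)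
    (hskew : ∀ (i j : ZMod 2) (u v : R), u ∈ Rg i → v ∈ Rg j → ∀ m : ℕ,
      Y u m v = (-1 : ℂ) ^ (i.val * j.val + 1) •
        ∑ᶠ p : ℕ, (((-1 : ℂ) ^ (m + p)) * ((p.factorial : ℂ)⁻¹)) •
          (⇑D)^[p] (Y v (m + p) u)) :
    ∀ (i j : ZMod 2) (u v : R), u ∈ Rg i → v ∈ Rg j → ∀ n : ℕ,
      D (Y u n v) - Y u n (D v) = Y (D u) n v := by
  intro i j u v hu hv n
  obtain ⟨N, hN⟩ := hfin v u
  set ε : ℂ := (-1 : ℂ) ^ (i.val * j.val + 1) with hε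
  have hD0 : ∀ p : ℕ, (⇑D)^[p] (0 : R) = 0 := fun p => Function.iterate_fixed (map_zero D) p
  have hvz : ∀ k, N + 1 ≤ k → Y v k u = 0 := fun k hk => hN k (by omega)
  have hDvz : ∀ k, N + 1 ≤ k → Y (D v) k u = 0 := by
    intro k hk
    obtain ⟨k', rfl⟩ : ∃ k', k = k' + 1 := ⟨k - 1, by omega⟩
    rw [htrans, hN k' (by omega), smul_zero]
  have hsum : ∀ (w : R), w ∈ Rg j → (∀ k, N + 1 ≤ k → Y w k u = 0) → ∀ m : ℕ,
      Y u m w = ε • ∑ p ∈ Finset.range (N + 2),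
        (((-1 : ℂ) ^ (m + p)) * ((p.factorial : ℂ)⁻¹)) • (⇑D)^[p] (Y w (m + p) u) := by
    intro w hw hwz m
    rw [hskew i j u w hu hw m]
    congr 1
    apply finsum_eq_finset_sum_of_support_subset
    intro p hp
    simp only [Function.mem_support] at hp
    by_contra hpc
    apply hp
    have hple : N + 1 ≤ m + p := by
      simp only [Finset.coe_range, Set.mem_Iio, not_lt] at hpc
      omega
    rw [hwz (m + p) hple, hD0, smul_zero]
  have e1 := hsum v hv hvz
  have e2 := hsum (D v) (hDg j v hv) hDvz n
  have hA : D (Y u n v) = ε • ∑ p ∈ Finset.range (N + 2),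
      (((-1 : ℂ) ^ (n + p)) * ((p.factorial : ℂ)⁻¹)) • (⇑D)^[p + 1] (Y v (n + p) u) := by
    rw [e1 n, map_smul, map_sum]
    congr 1
    refine Finset.sum_congr rfl fun p _ => ?_
    rw [map_smul, ← Function.iterate_succ_apply' (⇑D) p]
  cases n with
  | zero =>
    rw [htrans0, hA, e2, sub_eq_zero]
    congr 1
    refine sum_shift_eq N _ _ ?_ ?_ ?_
    · simp [htrans0 v u]
    · intro q hq
      have h1 : 0 + (q + 1) = q + 1 := by omega
      have h2 : 0 + q = q := by omega
      rw [h1, h2, htrans v u q, iterate_smul', smul_smul]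
      congr 1
      have hfac : (q.factorial : ℂ) ≠ 0 := Nat.cast_ne_zero.2 q.factorial_ne_zero
      have hq1 : ((q : ℂ) + 1) ≠ 0 := by
        have := Nat.cast_add_one_ne_zero (R := ℂ) q
        exact_mod_cast this
      rw [Nat.factorial_succ, pow_succ]
      push_cast
      field_simp
    · rw [show 0 + (N + 1) = N + 1 from by omega, hvz (N + 1) le_rfl, hD0, smul_zero]
  | succ m =>
    rw [htrans u v m, e1 m, hA, e2, smul_comm, ← smul_sub]
    congr 1
    rw [sub_eq_iff_eq_add, Finset.smul_sum, ← Finset.sum_add_distrib]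
    refine sum_shift_eq N _ _ ?_ ?_ ?_
    · rw [show m + 0 = m from rfl, show m + 1 + 0 = m + 1 from rfl, htrans v u m]
      simp only [Function.iterate_zero, id_eq]
      rw [smul_smul, smul_smul, ← add_smul]
      convert zero_smul ℂ (Y v m u)
      rw [pow_succ]
      ring
    · intro q hq
      have h1 : m + 1 + (q + 1) = (m + q + 1) + 1 := by omega
      have h2 : m + (q + 1) = m + q + 1 := by omega
      have h3 : m + 1 + q = m + q + 1 := by omega
      rw [h1, h2, h3, htrans v u (m + q + 1), iterate_smul', smul_smul, smul_smul, ← add_smul]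
      congr 1
      have hfac : (q.factorial : ℂ) ≠ 0 := Nat.cast_ne_zero.2 q.factorial_ne_zero
      rw [Nat.factorial_succ, pow_succ]
      have hq1 : ((q : ℂ) + 1) ≠ 0 := by
        have := Nat.cast_add_one_ne_zero (R := ℂ) q
        exact_mod_cast this
      push_cast
      field_simp
      ring
    · rw [hvz (m + 1 + (N + 1)) (by omega), hD0, smul_zero]
end

section
/- Let R = ℂ[∂]V be a free ℤ₂-graded ℂ[∂]-module on a ℤ₂-graded subspace V, and let Y⁺ : V → Hom(V, R[z⁻¹]z⁻¹) preserve the ℤ₂-grading. Extend Y⁺ by Y⁺(f(∂)u, z)v = f(d/dz)(Y⁺(u,z)v) for u,v ∈ V, and Y⁺(u,z)(∂^m v) = Σ_{p=0}^{m} (m choose p) ∂^{m−p} Y⁺((−∂)^p u, z) v. Then the extended map satisfies the translation axioms Y⁺(∂u,z) = dY⁺(u,z)/dz and ∂Y⁺(u,z) − Y⁺(u,z)∂ = Y⁺(∂u,z) on all of R. -/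
namespace ConformalExtension

variable (V : Type) [AddCommGroup V] [Module ℂ V]

/-- The free `ℂ[∂]`-module `R = ℂ[∂]V` on `V`, with `Σ ∂ⁿ vₙ` encoded as the
finitely supported family `(vₙ)`. -/
abbrev FreeMod := ℕ →₀ V

/-- The action of `∂` on `R = ℂ[∂]V`: `∂(Σ ∂ⁿ vₙ) = Σ ∂^{n+1} vₙ`. -/
noncomputable def del : FreeMod V →ₗ[ℂ] FreeMod V :=
  Finsupp.lmapDomain V ℂ (· + 1)

/-- The extension of `Y⁺ : V → Hom(V, R[z⁻¹]z⁻¹)` (components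
`Yv u n v = u₍ₙ₎v ∈ R`) to all of `R`, via
`Y⁺(f(∂)u, z)v = f(d/dz)(Y⁺(u,z)v)` (which in components gives
`(∂ᵏu)₍ₘ₎v = (−1)ᵏ m(m−1)⋯(m−k+1) u₍ₘ₋ₖ₎v`) and
`Y⁺(u,z)(∂ˡv) = Σ_{p=0}^{l} (l choose p) ∂^{l−p} Y⁺((−∂)ᵖu, z)v`. -/
noncomputable def extY (Yv : V → ℕ → V → FreeMod V)
    (f : FreeMod V) (m : ℕ) (g : FreeMod V) : FreeMod V :=
  ∑ k ∈ f.support, ∑ l ∈ g.support, ∑ p ∈ Finset.range (l + 1),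
    (((l.choose p : ℂ)) * ((-1 : ℂ) ^ k) * ((m.descFactorial (p + k) : ℂ))) •
      (⇑(del V))^[l - p] (Yv (f k) (m - (p + k)) (g l))

lemma succ_inj : Function.Injective (fun n : ℕ => n + 1) := add_left_injective 1

lemma del_support (f : FreeMod V) :
    (del V f).support = f.support.image (· + 1) :=
  Finsupp.mapDomain_support_of_injective succ_inj f

lemma del_apply_succ (f : FreeMod V) (k : ℕ) : del V f (k + 1) = f k :=
  Finsupp.mapDomain_apply succ_inj f k

private lemma choose_expand {M : Type*} [AddCommMonoid M] (l : ℕ) (t : ℕ → M) :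
    ∑ p ∈ Finset.range (l + 2), (l + 1).choose p • t p
      = ∑ p ∈ Finset.range (l + 1), l.choose p • t p
        + ∑ p ∈ Finset.range (l + 1), l.choose p • t (p + 1) := by
  rw [Finset.sum_range_succ' (fun p => (l + 1).choose p • t p) (l + 1)]
  simp only [Nat.choose_succ_succ, add_smul, Finset.sum_add_distrib,
    Nat.choose_zero_right, one_smul]
  have h : (∑ p ∈ Finset.range (l + 1), l.choose (p + 1) • t (p + 1)) + t 0
      = ∑ p ∈ Finset.range (l + 1), l.choose p • t p := by
    have h2 := Finset.sum_range_succ' (fun p => l.choose p • t p) (l + 1)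
    rw [Finset.sum_range_succ (fun p => l.choose p • t p) (l + 1),
      Nat.choose_succ_self, zero_smul, add_zero] at h2
    simpa using h2.symm
  simp only [Nat.succ_eq_add_one]
  rw [← h]
  abel

private lemma key (Yv : V → ℕ → V → FreeMod V) (u w : V) (m k l : ℕ) :
    del V (∑ p ∈ Finset.range (l + 1),
        ((l.choose p : ℂ) * (-1 : ℂ) ^ k * (m.descFactorial (p + k) : ℂ)) •
          (⇑(del V))^[l - p] (Yv u (m - (p + k)) w))
      - ∑ p ∈ Finset.range (l + 1 + 1),
        (((l + 1).choose p : ℂ) * (-1 : ℂ) ^ k * (m.descFactorial (p + k) : ℂ)) •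
          (⇑(del V))^[l + 1 - p] (Yv u (m - (p + k)) w)
      = ∑ p ∈ Finset.range (l + 1),
        ((l.choose p : ℂ) * (-1 : ℂ) ^ (k + 1) * (m.descFactorial (p + (k + 1)) : ℂ)) •
          (⇑(del V))^[l - p] (Yv u (m - (p + (k + 1))) w) := by
  set t : ℕ → FreeMod V := fun p =>
    ((-1 : ℂ) ^ k * (m.descFactorial (p + k) : ℂ)) •
      (⇑(del V))^[l + 1 - p] (Yv u (m - (p + k)) w) with ht
  have e1 : del V (∑ p ∈ Finset.range (l + 1),
      ((l.choose p : ℂ) * (-1 : ℂ) ^ k * (m.descFactorial (p + k) : ℂ)) •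
        (⇑(del V))^[l - p] (Yv u (m - (p + k)) w))
      = ∑ p ∈ Finset.range (l + 1), l.choose p • t p := by
    rw [map_sum]
    refine Finset.sum_congr rfl fun p hp => ?_
    have hpl : p ≤ l := by simpa [Nat.lt_succ_iff] using Finset.mem_range.mp hp
    have hsub : l + 1 - p = l - p + 1 := by omega
    simp only [ht, hsub]
    rw [map_smul, ← Function.iterate_succ_apply' (⇑(del V)) (l - p), mul_assoc, mul_smul,
      Nat.cast_smul_eq_nsmul]
  have e2 : (∑ p ∈ Finset.range (l + 1 + 1),
      (((l + 1).choose p : ℂ) * (-1 : ℂ) ^ k * (m.descFactorial (p + k) : ℂ)) •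
        (⇑(del V))^[l + 1 - p] (Yv u (m - (p + k)) w))
      = ∑ p ∈ Finset.range (l + 2), (l + 1).choose p • t p := by
    refine Finset.sum_congr rfl fun p _ => ?_
    simp only [ht]
    rw [mul_assoc, mul_smul, Nat.cast_smul_eq_nsmul]
  have e3 : (∑ p ∈ Finset.range (l + 1),
      ((l.choose p : ℂ) * (-1 : ℂ) ^ (k + 1) * (m.descFactorial (p + (k + 1)) : ℂ)) •
        (⇑(del V))^[l - p] (Yv u (m - (p + (k + 1))) w))
      = - ∑ p ∈ Finset.range (l + 1), l.choose p • t (p + 1) := by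
    rw [← Finset.sum_neg_distrib]
    refine Finset.sum_congr rfl fun p _ => ?_
    simp only [ht, show l + 1 - (p + 1) = l - p from by omega,
      show p + (k + 1) = p + 1 + k from by omega]
    rw [← Nat.cast_smul_eq_nsmul ℂ, smul_smul, ← neg_smul]
    congr 1
    push_cast
    ring
  rw [e1, e2, e3, choose_expand]
  abel

/-- The extended map satisfies the translation axioms
`Y⁺(∂u,z) = dY⁺(u,z)/dz` and `∂Y⁺(u,z) − Y⁺(u,z)∂ = Y⁺(∂u,z)` on all of `R`. -/
theorem extY_translation_axioms
    (Vg : ZMod 2 → Submodule ℂ V)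
    (Yv : V → ℕ → V → FreeMod V)
    (hYg : ∀ (i j : ZMod 2) (u v : V), u ∈ Vg i → v ∈ Vg j →
      ∀ n k : ℕ, (Yv u n v) k ∈ Vg (i + j)) :
    ∀ (f g : FreeMod V) (m : ℕ),
      extY V Yv (del V f) 0 g = 0 ∧
      extY V Yv (del V f) (m + 1) g = (-(m + 1 : ℂ)) • extY V Yv f m g ∧
      del V (extY V Yv f m g) - extY V Yv f m (del V g) = extY V Yv (del V f) m g := by
  intro f g m
  have himg : ∀ x ∈ f.support, ∀ y ∈ f.support,
      (fun n : ℕ => n + 1) x = (fun n : ℕ => n + 1) y → x = y :=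
    fun a _ b _ h => succ_inj h
  have himg' : ∀ x ∈ g.support, ∀ y ∈ g.support,
      (fun n : ℕ => n + 1) x = (fun n : ℕ => n + 1) y → x = y :=
    fun a _ b _ h => succ_inj h
  refine ⟨?_, ?_, ?_⟩
  · -- part 1
    unfold extY
    apply Finset.sum_eq_zero
    intro k hk
    rw [del_support] at hk
    obtain ⟨k', -, rfl⟩ := Finset.mem_image.mp hk
    refine Finset.sum_eq_zero fun l _ => Finset.sum_eq_zero fun p _ => ?_
    have h0 : Nat.descFactorial 0 (p + (k' + 1)) = 0 := by
      have he : p + (k' + 1) = (p + k') + 1 := by omega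
      rw [he, Nat.zero_descFactorial_succ]
    rw [h0]
    simp
  · -- part 2
    unfold extY
    rw [del_support, Finset.sum_image himg, Finset.smul_sum]
    refine Finset.sum_congr rfl fun k hk => ?_
    rw [Finset.smul_sum]
    refine Finset.sum_congr rfl fun l _ => ?_
    rw [Finset.smul_sum]
    refine Finset.sum_congr rfl fun p _ => ?_
    rw [del_apply_succ]
    have h1 : m + 1 - (p + (k + 1)) = m - (p + k) := by omega
    have h2 : p + (k + 1) = (p + k) + 1 := by omega
    rw [h1, h2, Nat.succ_descFactorial_succ, smul_smul]
    congr 1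
    push_cast
    ring
  · -- part 3
    unfold extY
    rw [map_sum, ← Finset.sum_sub_distrib]
    conv_rhs => rw [del_support, Finset.sum_image himg]
    refine Finset.sum_congr rfl fun k hk => ?_
    rw [del_support, Finset.sum_image himg', map_sum, ← Finset.sum_sub_distrib]
    refine Finset.sum_congr rfl fun l hl => ?_
    simp only [del_apply_succ]
    exact key V Yv (f k) (g l) m k l

end ConformalExtension
end

section
/- Let R be a ℂ[∂]-module and Y⁺ satisfy the translation axiom Y⁺(∂u,z) = dY⁺(u,z)/dz and the derivation property ∂Y⁺(u,z)v − Y⁺(u,z)∂v = Y⁺(∂u,z)v. If skew-symmetry (1.3) holds for a pair (u,v), then it holds for (∂u, v) and for (u, ∂v). -/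
/-- The inductive step (3.6)-(3.7) of Proposition 3.1: if `Y⁺` (components
`Y u n v = u₍ₙ₎v`) satisfies the translation axiom `Y⁺(∂u,z) = dY⁺(u,z)/dz`
and the derivation property `∂Y⁺(u,z)v − Y⁺(u,z)∂v = Y⁺(∂u,z)v`, and the
skew-symmetry (1.3) holds for the pair `(u,v)`, i.e.
`u₍ₘ₎v = (−1)^{i₁i₂+1} Σ_p ((−1)^{m+p}/p!) ∂^p (v₍ₘ₊ₚ₎u)` for all `m`,
then skew-symmetry holds for the pairs `(∂u, v)` and `(u, ∂v)`. -/
theorem skew_symmetry_inductive_step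
    (R : Type) [AddCommGroup R] [Module ℂ R]
    (Rg : ZMod 2 → Submodule ℂ R)
    (D : R →ₗ[ℂ] R) (Y : R → ℕ → R → R)
    (hDg : ∀ (i : ZMod 2) (x : R), x ∈ Rg i → D x ∈ Rg i)
    (hfin : ∀ x y : R, ∃ N : ℕ, ∀ n ≥ N, Y x n y = 0)
    (htrans0 : ∀ x y : R, Y (D x) 0 y = 0)
    (htrans : ∀ (x y : R) (n : ℕ), Y (D x) (n + 1) y = (-(n + 1 : ℂ)) • Y x n y)
    (hder : ∀ (x y : R) (n : ℕ), D (Y x n y) - Y x n (D y) = Y (D x) n y)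
    (i₁ i₂ : ZMod 2) (u v : R) (hu : u ∈ Rg i₁) (hv : v ∈ Rg i₂)
    (hskew : ∀ m : ℕ, Y u m v = (-1 : ℂ) ^ (i₁.val * i₂.val + 1) •
      ∑ᶠ p : ℕ, (((-1 : ℂ) ^ (m + p)) * ((p.factorial : ℂ)⁻¹)) •
        (⇑D)^[p] (Y v (m + p) u)) :
    (∀ m : ℕ, Y (D u) m v = (-1 : ℂ) ^ (i₁.val * i₂.val + 1) •
      ∑ᶠ p : ℕ, (((-1 : ℂ) ^ (m + p)) * ((p.factorial : ℂ)⁻¹)) •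
        (⇑D)^[p] (Y v (m + p) (D u))) ∧
    (∀ m : ℕ, Y u m (D v) = (-1 : ℂ) ^ (i₁.val * i₂.val + 1) •
      ∑ᶠ p : ℕ, (((-1 : ℂ) ^ (m + p)) * ((p.factorial : ℂ)⁻¹)) •
        (⇑D)^[p] (Y (D v) (m + p) u)) := by
  -- abbreviation for the scalar coefficients
  set c : ℕ → ℕ → ℂ := fun m p => ((-1 : ℂ) ^ (m + p)) * ((p.factorial : ℂ)⁻¹) with hc
  set ε : ℂ := (-1 : ℂ) ^ (i₁.val * i₂.val + 1) with hε
  -- basic facts about iterates of D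
  have hD0 : ∀ p : ℕ, (⇑D)^[p] (0 : R) = 0 := fun p =>
    Function.iterate_fixed (map_zero D) p
  have hDsmul : ∀ (p : ℕ) (e : ℂ) (x : R), (⇑D)^[p] (e • x) = e • (⇑D)^[p] x := by
    intro p
    induction p with
    | zero => intro e x; simp
    | succ n ih =>
      intro e x
      rw [Function.iterate_succ_apply, map_smul, ih, Function.iterate_succ_apply]
  have hDsub : ∀ (p : ℕ) (x y : R), (⇑D)^[p] (x - y) = (⇑D)^[p] x - (⇑D)^[p] y := by
    intro p
    induction p with
    | zero => intro x y; simp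
    | succ n ih =>
      intro x y
      rw [Function.iterate_succ_apply, map_sub, ih, Function.iterate_succ_apply,
        Function.iterate_succ_apply]
  -- the vanishing bound
  obtain ⟨N, hN⟩ := hfin v u
  set M := N + 1 with hM
  have ha : ∀ n, M ≤ n → Y v n u = 0 := fun n hn => hN n (by omega)
  have ht : ∀ n, M ≤ n → Y (D v) n u = 0 := by
    intro n hn
    obtain ⟨m, rfl⟩ : ∃ m, n = m + 1 := ⟨n - 1, by omega⟩
    rw [htrans v u m, hN m (by omega), smul_zero]
  have hbval : ∀ n, Y v n (D u) = D (Y v n u) - Y (D v) n u := by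
    intro n
    rw [← hder v u n]; abel
  have hb : ∀ n, M ≤ n → Y v n (D u) = 0 := by
    intro n hn
    rw [hbval n, ha n hn, ht n hn, map_zero, sub_zero]
  -- converting the finsums to finite sums over `Finset.range (M+1)`
  have key : ∀ f : ℕ → R, (∀ p, M ≤ p → f p = 0) →
      ∑ᶠ p, f p = ∑ p ∈ Finset.range (M + 1), f p := by
    intro f hf
    apply finsum_eq_sum_of_support_subset
    intro p hp
    simp only [Function.mem_support] at hp
    simp only [Finset.coe_range, Set.mem_Iio]
    by_contra h
    exact hp (hf p (by omega))
  have keyA : ∀ m : ℕ, (∑ᶠ p : ℕ, c m p • (⇑D)^[p] (Y v (m + p) u)) =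
      ∑ p ∈ Finset.range (M + 1), c m p • (⇑D)^[p] (Y v (m + p) u) := by
    intro m
    exact key _ (fun p hp => by rw [ha (m + p) (by omega), hD0, smul_zero])
  have keyB : ∀ m : ℕ, (∑ᶠ p : ℕ, c m p • (⇑D)^[p] (Y v (m + p) (D u))) =
      ∑ p ∈ Finset.range (M + 1), c m p • (⇑D)^[p] (Y v (m + p) (D u)) := by
    intro m
    exact key _ (fun p hp => by rw [hb (m + p) (by omega), hD0, smul_zero])
  have keyT : ∀ m : ℕ, (∑ᶠ p : ℕ, c m p • (⇑D)^[p] (Y (D v) (m + p) u)) =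
      ∑ p ∈ Finset.range (M + 1), c m p • (⇑D)^[p] (Y (D v) (m + p) u) := by
    intro m
    exact key _ (fun p hp => by rw [ht (m + p) (by omega), hD0, smul_zero])
  -- factorials are nonzero
  have hfac : ∀ p : ℕ, (p.factorial : ℂ) ≠ 0 := fun p =>
    Nat.cast_ne_zero.mpr (Nat.factorial_ne_zero p)
  have hinv : ∀ q : ℕ, (((q + 1).factorial : ℂ))⁻¹ * ((q : ℂ) + 1) = ((q.factorial : ℂ))⁻¹ := by
    intro q
    have hq1 : ((q : ℂ) + 1) ≠ 0 := Nat.cast_add_one_ne_zero q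
    rw [Nat.factorial_succ]
    push_cast
    rw [mul_inv, mul_comm ((q : ℂ) + 1)⁻¹, mul_assoc, inv_mul_cancel₀ hq1, mul_one]
  -- Goal 1
  have goal1 : ∀ m : ℕ, Y (D u) m v =
      ε • ∑ᶠ p : ℕ, c m p • (⇑D)^[p] (Y v (m + p) (D u)) := by
    intro m
    rw [keyB m]
    cases m with
    | zero =>
      rw [htrans0 u v]
      simp only [Nat.zero_add]
      have hterm : ∀ p ∈ Finset.range (M + 1),
          c 0 p • (⇑D)^[p] (Y v p (D u)) =
          c 0 p • (⇑D)^[p] (D (Y v p u)) -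
            c 0 p • (⇑D)^[p] (Y (D v) p u) := by
        intro p _
        rw [hbval p, hDsub, smul_sub]
      rw [Finset.sum_congr rfl hterm, Finset.sum_sub_distrib]
      have hA : (∑ p ∈ Finset.range (M + 1), c 0 p • (⇑D)^[p] (D (Y v p u))) =
          ∑ p ∈ Finset.range M, c 0 p • (⇑D)^[p] (D (Y v p u)) := by
        rw [Finset.sum_range_succ, ha M (by omega), map_zero, hD0, smul_zero, add_zero]
      have hB : (∑ p ∈ Finset.range (M + 1), c 0 p • (⇑D)^[p] (Y (D v) p u)) =
          ∑ p ∈ Finset.range M, c 0 p • (⇑D)^[p] (D (Y v p u)) := by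
        rw [Finset.sum_range_succ']
        have h0 : c 0 0 • (⇑D)^[0] (Y (D v) 0 u) = 0 := by
          simp [htrans0 v u]
        rw [h0, add_zero]
        apply Finset.sum_congr rfl
        intro p _
        rw [htrans v u p, hDsmul, smul_smul]
        have hs : c 0 (p + 1) * -(↑p + 1) = c 0 p := by
          simp only [hc, Nat.zero_add]
          linear_combination ((-1 : ℂ) ^ p) * hinv p
        rw [hs, Function.iterate_succ_apply]
      rw [hA, hB, sub_self, smul_zero]
    | succ k =>
      rw [htrans u v k, hskew k, keyA k]
      have hterm : ∀ p ∈ Finset.range (M + 1),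
          c (k + 1) p • (⇑D)^[p] (Y v (k + 1 + p) (D u)) =
          c (k + 1) p • (⇑D)^[p] (D (Y v (k + 1 + p) u)) -
            (c (k + 1) p * -(↑(k + p) + 1)) • (⇑D)^[p] (Y v (k + p) u) := by
        intro p _
        rw [hbval (k + 1 + p), hDsub, smul_sub]
        congr 1
        have hidx : k + 1 + p = k + p + 1 := by omega
        rw [hidx, htrans v u (k + p), hDsmul, smul_smul]
      rw [Finset.sum_congr rfl hterm, Finset.sum_sub_distrib]
      -- move the scalar `-(k+1)` inside the sum on the LHS
      rw [smul_comm (-(↑k + 1 : ℂ)) ε, Finset.smul_sum]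
      congr 1
      -- now an identity between sums of vectors
      have htgt : ∀ p ∈ Finset.range (M + 1),
          (-(↑k + 1 : ℂ)) • c k p • (⇑D)^[p] (Y v (k + p) u) =
          ((-(↑k + 1 : ℂ)) * c k p) • (⇑D)^[p] (Y v (k + p) u) := by
        intro p _; rw [smul_smul]
      rw [Finset.sum_congr rfl htgt]
      rw [eq_sub_iff_add_eq, ← Finset.sum_add_distrib]
      have hcomb : ∀ p ∈ Finset.range (M + 1),
          ((-(↑k + 1 : ℂ)) * c k p) • (⇑D)^[p] (Y v (k + p) u) +
            (c (k + 1) p * -(↑(k + p) + 1)) • (⇑D)^[p] (Y v (k + p) u) =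
          ((-(↑k + 1 : ℂ)) * c k p + c (k + 1) p * -(↑(k + p) + 1)) •
            (⇑D)^[p] (Y v (k + p) u) := by
        intro p _; rw [add_smul]
      rw [Finset.sum_congr rfl hcomb]
      -- RHS: drop the last (vanishing) term
      conv_rhs => rw [Finset.sum_range_succ]
      rw [ha (k + 1 + M) (by omega), map_zero, hD0, smul_zero, add_zero]
      -- LHS: peel off the first (vanishing) term
      conv_lhs => rw [Finset.sum_range_succ']
      have h0 : ((-(↑k + 1 : ℂ)) * c k 0 + c (k + 1) 0 * -(↑(k + 0) + 1)) •
          (⇑D)^[0] (Y v (k + 0) u) = 0 := by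
        have hz : (-(↑k + 1 : ℂ)) * c k 0 + c (k + 1) 0 * -(↑(k + 0) + 1) = 0 := by
          simp only [hc, Nat.factorial_zero, Nat.cast_one, inv_one, mul_one, Nat.add_zero]
          push_cast
          ring
        rw [hz, zero_smul]
      rw [h0, add_zero]
      apply Finset.sum_congr rfl
      intro p _
      have hs : (-(↑k + 1 : ℂ)) * c k (p + 1) + c (k + 1) (p + 1) * -(↑(k + (p + 1)) + 1) =
          c (k + 1) p := by
        simp only [hc]
        push_cast
        linear_combination ((-1 : ℂ) ^ (k + p + 1)) * hinv p
      rw [hs]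
      have hidx : k + (p + 1) = k + 1 + p := by omega
      rw [hidx]
      have : (⇑D)^[p + 1] (Y v (k + 1 + p) u) = (⇑D)^[p] (D (Y v (k + 1 + p) u)) :=
        Function.iterate_succ_apply D p _
      rw [this]
  refine ⟨goal1, ?_⟩
  -- Goal 2
  intro m
  have hY : Y u m (D v) = D (Y u m v) - Y (D u) m v := by
    rw [← hder u v m]; abel
  rw [hY, hskew m, goal1 m, keyA m, keyB m, keyT m, map_smul, map_sum, ← smul_sub,
    ← Finset.sum_sub_distrib]
  congr 1
  apply Finset.sum_congr rfl
  intro p _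
  rw [map_smul, hbval (m + p), hDsub, smul_sub]
  have : D ((⇑D)^[p] (Y v (m + p) u)) = (⇑D)^[p] (D (Y v (m + p) u)) := by
    rw [← Function.iterate_succ_apply' D p, Function.iterate_succ_apply D p]
  rw [this]
  abel
end
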